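/- A set E ⊆ ℝ^d is weakly porous if and only if its closure is weakly porous. -/

import Mathlib

open MeasureTheory Metric

/-- A half-open axis-parallel cube in `ℝ^d`: `[a₁, a₁+l) × ⋯ × [a_d, a_d+l)`. -/
structure Cube (d : ℕ) where
  a : Fin d → ℝ
  l : ℝ
  l_pos : 0 < l

/-- The underlying point set of a cube. -/
def Cube.set {d : ℕ} (Q : Cube d) : Set (EuclideanSpace ℝ (Fin d)) :=
  {x | ∀ i, Q.a i ≤ x i ∧ x i < Q.a i + Q.l}

/-- `Q` is a dyadic subcube of `R`: a member of `𝒟_j(R)` for some `j ≥ 0`. -/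
def IsDyadicSubcube {d : ℕ} (R Q : Cube d) : Prop :=
  ∃ j : ℕ, ∃ k : Fin d → ℕ, (∀ i, k i < 2 ^ j) ∧ Q.l = R.l / 2 ^ j ∧
    ∀ i, Q.a i = R.a i + (k i : ℝ) * (R.l / 2 ^ j)

/-- `Q' ∈ ℱ(R,E)`: a maximal dyadic subcube of `R` avoiding `E`, i.e.
`Q' ∩ E = ∅` and its dyadic parent `πQ'` meets `E`. -/
def IsMaxEmpty {d : ℕ} (R : Cube d) (E : Set (EuclideanSpace ℝ (Fin d))) (Q' : Cube d) : Prop :=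
  IsDyadicSubcube R Q' ∧ Q'.set ∩ E = ∅ ∧
    ∃ P : Cube d, IsDyadicSubcube R P ∧ P.l = 2 * Q'.l ∧ Q'.set ⊆ P.set ∧ (P.set ∩ E).Nonempty

/-- `M = M(R)`: a largest dyadic subcube of `R` containing no point of `E`. -/
def IsLargestEmptyDyadic {d : ℕ} (R : Cube d) (E : Set (EuclideanSpace ℝ (Fin d)))
    (M : Cube d) : Prop :=
  IsDyadicSubcube R M ∧ M.set ∩ E = ∅ ∧
    ∀ Q : Cube d, IsDyadicSubcube R Q → Q.set ∩ E = ∅ → Q.l ≤ M.l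

/-- Weak porosity of `E ⊆ ℝ^d`. -/
def WeaklyPorous {d : ℕ} (E : Set (EuclideanSpace ℝ (Fin d))) : Prop :=
  ∃ c δ : ℝ, 0 < c ∧ c < 1 ∧ 0 < δ ∧ δ < 1 ∧
    ∀ R : Cube d, ∃ M : Cube d, IsLargestEmptyDyadic R E M ∧
      ∃ F : Finset (Cube d),
        (↑F : Set (Cube d)).Pairwise (fun Q Q' => Disjoint Q.set Q'.set) ∧
        (∀ Q ∈ F, IsDyadicSubcube R Q ∧ Q.set ∩ E = ∅ ∧
          ENNReal.ofReal δ * volume M.set ≤ volume Q.set) ∧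
        ENNReal.ofReal c * volume R.set ≤ ∑ Q ∈ F, volume Q.set

/-!
If a dyadic cube `Q` misses `E`, its dyadic grandchild `Q.innerQuarter` (side `Q.l / 4`, offset
`Q.l / 4` in every coordinate) lies in the interior of `Q`, hence misses `closure E`. Replacing
every cube of a porosity family for `E` by this grandchild costs exactly a factor `4⁻ᵈ` in volume,
while `M(R)` can only shrink when `E` grows to `closure E`; so `c` and `δ` divided by `4ᵈ` work for
`closure E`. Conversely, a family for `closure E` is one for `E`, and since the grandchild of
`M(R)` for `E` misses `closure E`, `M(R)` for `E` has side at most four times that for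
`closure E`: dividing `δ` by `4ᵈ` suffices.
-/

lemma Set.inter_eq_empty_of_subset_right {α : Type*} {s t u : Set α} (h : s ∩ u = ∅)
    (htu : t ⊆ u) : s ∩ t = ∅ :=
  Set.eq_empty_of_subset_empty (h ▸ Set.inter_subset_inter_right s htu)

namespace Cube

variable {d : ℕ}

lemma volume_set (Q : Cube d) : volume Q.set = ENNReal.ofReal (Q.l ^ d) := by
  have h : Q.set = (MeasurableEquiv.toLp 2 (Fin d → ℝ)).symm ⁻¹'
      (Set.univ.pi fun i => Set.Ico (Q.a i) (Q.a i + Q.l)) := by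
    ext x; simp [Cube.set, Set.mem_pi, MeasurableEquiv.coe_toLp_symm, Set.mem_Ico]
  rw [h, (EuclideanSpace.volume_preserving_symm_measurableEquiv_toLp (Fin d)).measure_preimage
    (MeasurableSet.univ_pi fun i => measurableSet_Ico).nullMeasurableSet, volume_pi_pi]
  simp [Real.volume_Ico, ← ENNReal.ofReal_pow Q.l_pos.le]

lemma ofReal_mul_volume_le_volume_iff {δ : ℝ} (hδ : 0 ≤ δ) (M Q : Cube d) :
    ENNReal.ofReal δ * volume M.set ≤ volume Q.set ↔ δ * M.l ^ d ≤ Q.l ^ d := by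
  rw [volume_set, volume_set, ← ENNReal.ofReal_mul hδ,
    ENNReal.ofReal_le_ofReal_iff (pow_nonneg Q.l_pos.le d)]

noncomputable def innerQuarter (Q : Cube d) : Cube d :=
  ⟨fun i => Q.a i + Q.l / 4, Q.l / 4, by linarith [Q.l_pos]⟩

lemma innerQuarter_injective : Function.Injective (innerQuarter (d := d)) := by
  rintro ⟨a, l, hl⟩ ⟨a', l', hl'⟩ h
  simp only [innerQuarter, Cube.mk.injEq, funext_iff] at h ⊢
  obtain ⟨ha, hl⟩ := h
  have hll : l = l' := by linarith
  subst hll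
  exact ⟨fun i => by linarith [ha i], rfl⟩

lemma volume_innerQuarter_set (Q : Cube d) :
    volume Q.innerQuarter.set = ENNReal.ofReal (1 / 4 ^ d) * volume Q.set := by
  rw [volume_set, volume_set, ← ENNReal.ofReal_mul (by positivity), innerQuarter, div_pow,
    one_div_mul_eq_div]

lemma innerQuarter_set_subset_interior (Q : Cube d) :
    Q.innerQuarter.set ⊆ interior Q.set := by
  have hl := Q.l_pos
  have hopen : IsOpen {x : EuclideanSpace ℝ (Fin d) | ∀ i, Q.a i < x i ∧ x i < Q.a i + Q.l} := by
    simp only [Set.ofPred_forall, Set.ofPred_and]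
    exact isOpen_iInter_of_finite fun i =>
      (isOpen_lt continuous_const (by fun_prop)).inter (isOpen_lt (by fun_prop) continuous_const)
  refine fun x hx => interior_maximal (fun y hy i => ⟨(hy i).1.le, (hy i).2⟩) hopen fun i => ?_
  obtain ⟨h₁, h₂⟩ := hx i
  simp only [innerQuarter] at h₁ h₂
  constructor <;> linarith

lemma innerQuarter_set_subset (Q : Cube d) : Q.innerQuarter.set ⊆ Q.set :=
  Q.innerQuarter_set_subset_interior.trans interior_subset

lemma innerQuarter_inter_closure_eq_empty (Q : Cube d) {E : Set (EuclideanSpace ℝ (Fin d))}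
    (hE : Q.set ∩ E = ∅) : Q.innerQuarter.set ∩ closure E = ∅ := by
  rw [← Set.disjoint_iff_inter_eq_empty] at hE ⊢
  exact ((hE.mono_left interior_subset).closure_right isOpen_interior).mono_left
    Q.innerQuarter_set_subset_interior

end Cube

section Dyadic

variable {d : ℕ}

lemma IsDyadicSubcube.trans {R Q P : Cube d} (hQ : IsDyadicSubcube R Q)
    (hP : IsDyadicSubcube Q P) : IsDyadicSubcube R P := by
  obtain ⟨j₁, k₁, hk₁, hl₁, ha₁⟩ := hQ
  obtain ⟨j₂, k₂, hk₂, hl₂, ha₂⟩ := hP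
  refine ⟨j₁ + j₂, fun i => k₁ i * 2 ^ j₂ + k₂ i, fun i => ?_, ?_, fun i => ?_⟩
  · calc k₁ i * 2 ^ j₂ + k₂ i < (k₁ i + 1) * 2 ^ j₂ := by linarith [hk₂ i]
      _ ≤ 2 ^ j₁ * 2 ^ j₂ := Nat.mul_le_mul_right _ (hk₁ i)
      _ = 2 ^ (j₁ + j₂) := (pow_add 2 j₁ j₂).symm
  · rw [hl₂, hl₁, pow_add, div_div]
  · rw [ha₂ i, ha₁ i, hl₁, pow_add]
    push_cast
    field_simp
    ring

lemma isDyadicSubcube_innerQuarter (Q : Cube d) : IsDyadicSubcube Q Q.innerQuarter :=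
  ⟨2, fun _ => 1, fun _ => by norm_num, by norm_num [Cube.innerQuarter],
    fun _ => by norm_num [Cube.innerQuarter]⟩

lemma exists_isLargestEmptyDyadic {R Q : Cube d} {E : Set (EuclideanSpace ℝ (Fin d))}
    (hQ : IsDyadicSubcube R Q) (hQE : Q.set ∩ E = ∅) : ∃ M, IsLargestEmptyDyadic R E M := by
  classical
  have hne : ∃ j : ℕ, ∃ Q : Cube d, IsDyadicSubcube R Q ∧ Q.l = R.l / 2 ^ j ∧ Q.set ∩ E = ∅ :=
    let ⟨j, k, hk, hl, ha⟩ := hQ; ⟨j, Q, ⟨j, k, hk, hl, ha⟩, hl, hQE⟩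
  obtain ⟨M, hM, hMl, hME⟩ := Nat.find_spec hne
  refine ⟨M, hM, hME, fun Q' hQ' hQ'E => ?_⟩
  obtain ⟨j, k, hk, hl, ha⟩ := hQ'
  rw [hl, hMl]
  gcongr
  · exact R.l_pos.le
  · exact one_le_two
  · exact Nat.find_min' hne ⟨Q', ⟨j, k, hk, hl, ha⟩, hl, hQ'E⟩

lemma IsLargestEmptyDyadic.l_le_of_subset {R M M' : Cube d}
    {E E' : Set (EuclideanSpace ℝ (Fin d))} (hM : IsLargestEmptyDyadic R E M)
    (hM' : IsLargestEmptyDyadic R E' M') (hEE' : E ⊆ E') : M'.l ≤ M.l :=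
  hM.2.2 M' hM'.1 (Set.inter_eq_empty_of_subset_right hM'.2.1 hEE')

lemma IsLargestEmptyDyadic.l_le_four_mul_of_closure {R M M' : Cube d}
    {E : Set (EuclideanSpace ℝ (Fin d))} (hM : IsLargestEmptyDyadic R E M)
    (hM' : IsLargestEmptyDyadic R (closure E) M') : M.l ≤ 4 * M'.l := by
  have := hM'.2.2 M.innerQuarter (hM.1.trans (isDyadicSubcube_innerQuarter M))
    (M.innerQuarter_inter_closure_eq_empty hM.2.1)
  simp only [Cube.innerQuarter] at this
  linarith

end Dyadic

def IsPorousFamily {d : ℕ} (R : Cube d) (E : Set (EuclideanSpace ℝ (Fin d))) (M : Cube d)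
    (c δ : ℝ) (F : Finset (Cube d)) : Prop :=
  (↑F : Set (Cube d)).Pairwise (fun Q Q' => Disjoint Q.set Q'.set) ∧
    (∀ Q ∈ F, IsDyadicSubcube R Q ∧ Q.set ∩ E = ∅ ∧
      ENNReal.ofReal δ * volume M.set ≤ volume Q.set) ∧
    ENNReal.ofReal c * volume R.set ≤ ∑ Q ∈ F, volume Q.set

namespace IsPorousFamily

variable {d : ℕ} {R M M' : Cube d} {E : Set (EuclideanSpace ℝ (Fin d))} {c δ : ℝ}
  {F : Finset (Cube d)}

open Classical in
lemma image_innerQuarter (hF : IsPorousFamily R E M c δ F) (hδ : 0 ≤ δ)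
    (hM' : M'.l ≤ M.l) :
    IsPorousFamily R (closure E) M' (c / 4 ^ d) (δ / 4 ^ d) (F.image Cube.innerQuarter) := by
  obtain ⟨hdisj, hmem, hsum⟩ := hF
  refine ⟨?_, ?_, ?_⟩
  · rw [Finset.coe_image]
    rintro _ ⟨Q, hQ, rfl⟩ _ ⟨Q', hQ', rfl⟩ hne
    exact (hdisj hQ hQ' (ne_of_apply_ne _ hne)).mono Q.innerQuarter_set_subset
      Q'.innerQuarter_set_subset
  · simp only [Finset.mem_image, forall_exists_index, and_imp, forall_apply_eq_imp_iff₂]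
    intro Q hQ
    obtain ⟨hQR, hQE, hQM⟩ := hmem Q hQ
    refine ⟨hQR.trans (isDyadicSubcube_innerQuarter Q), Q.innerQuarter_inter_closure_eq_empty hQE,
      ?_⟩
    rw [Cube.ofReal_mul_volume_le_volume_iff (by positivity)]
    rw [Cube.ofReal_mul_volume_le_volume_iff hδ] at hQM
    calc δ / 4 ^ d * M'.l ^ d ≤ δ * M.l ^ d / 4 ^ d := by
          rw [div_mul_eq_mul_div]; gcongr; exact M'.l_pos.le
      _ ≤ Q.l ^ d / 4 ^ d := by gcongr
      _ = Q.innerQuarter.l ^ d := by rw [Cube.innerQuarter, div_pow]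
  · rw [Finset.sum_image fun _ _ _ _ h => Cube.innerQuarter_injective h]
    simp only [Cube.volume_innerQuarter_set, ← Finset.mul_sum]
    calc ENNReal.ofReal (c / 4 ^ d) * volume R.set
        = ENNReal.ofReal (1 / 4 ^ d) * (ENNReal.ofReal c * volume R.set) := by
          rw [← mul_assoc, ← ENNReal.ofReal_mul (by positivity), one_div_mul_eq_div]
      _ ≤ _ := by gcongr

lemma of_closure (hF : IsPorousFamily R (closure E) M' c δ F) (hδ : 0 ≤ δ)
    (hM : M.l ≤ 4 * M'.l) : IsPorousFamily R E M c (δ / 4 ^ d) F := by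
  obtain ⟨hdisj, hmem, hsum⟩ := hF
  refine ⟨hdisj, fun Q hQ => ?_, hsum⟩
  obtain ⟨hQR, hQE, hQM'⟩ := hmem Q hQ
  refine ⟨hQR, Set.inter_eq_empty_of_subset_right hQE subset_closure, ?_⟩
  rw [Cube.ofReal_mul_volume_le_volume_iff (by positivity)]
  rw [Cube.ofReal_mul_volume_le_volume_iff hδ] at hQM'
  calc δ / 4 ^ d * M.l ^ d ≤ δ / 4 ^ d * (4 * M'.l) ^ d := by gcongr; exact M.l_pos.le
    _ = δ * M'.l ^ d := by rw [mul_pow]; field_simp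
    _ ≤ Q.l ^ d := hQM'

end IsPorousFamily

lemma div_four_pow_lt_one {x : ℝ} (n : ℕ) (hx : x < 1) : x / 4 ^ n < 1 := by
  rw [div_lt_one (by positivity)]
  linarith [one_le_pow₀ (M₀ := ℝ) (a := 4) (n := n) (by norm_num)]

namespace WeaklyPorous

variable {d : ℕ} {E : Set (EuclideanSpace ℝ (Fin d))}

theorem of_closure (hE : WeaklyPorous (closure E)) : WeaklyPorous E := by
  obtain ⟨c, δ, hc, hc1, hδ, hδ1, hporous⟩ := hE
  refine ⟨c, δ / 4 ^ d, hc, hc1, by positivity, div_four_pow_lt_one d hδ1, fun R => ?_⟩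
  obtain ⟨M', hM', F, hF⟩ := hporous R
  obtain ⟨M, hM⟩ :=
    exists_isLargestEmptyDyadic hM'.1 (Set.inter_eq_empty_of_subset_right hM'.2.1 subset_closure)
  exact ⟨M, hM, F, IsPorousFamily.of_closure hF hδ.le (hM.l_le_four_mul_of_closure hM')⟩

theorem closure (hE : WeaklyPorous E) : WeaklyPorous (closure E) := by
  obtain ⟨c, δ, hc, hc1, hδ, hδ1, hporous⟩ := hE
  refine ⟨c / 4 ^ d, δ / 4 ^ d, by positivity, div_four_pow_lt_one d hc1, by positivity,
    div_four_pow_lt_one d hδ1, fun R => ?_⟩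
  obtain ⟨M, hM, F, hF⟩ := hporous R
  obtain ⟨M', hM'⟩ := exists_isLargestEmptyDyadic (hM.1.trans (isDyadicSubcube_innerQuarter M))
    (M.innerQuarter_inter_closure_eq_empty hM.2.1)
  exact ⟨M', hM', _, IsPorousFamily.image_innerQuarter hF hδ.le
    (hM.l_le_of_subset hM' subset_closure)⟩

end WeaklyPorous

/-- E is weakly porous iff its closure is weakly porous. -/
theorem stmt12 {d : ℕ} (E : Set (EuclideanSpace ℝ (Fin d))) :
    WeaklyPorous E ↔ WeaklyPorous (closure E) :=
  ⟨WeaklyPorous.closure, WeaklyPorous.of_closure⟩
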